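/- Let d ≥ 2 and let V be a finite set with |V| ≥ d+1. Let 𝓛 be a nonempty family of subsets of V such that |L| ∈ {d, d+1, |V|−1} for every L ∈ 𝓛. Then the complex (V, ∪_{L ∈ 𝓛} B_d(V,L)) is boolean representable. -/

import Mathlib

open scoped Classical

variable {V : Type*}

/-- A (finite) simplicial complex on vertex set `V`: all singletons are faces and
faces are closed under taking subsets. -/
def IsSimplicialComplex [DecidableEq V] (H : Set (Finset V)) : Prop :=
  (∀ v : V, {v} ∈ H) ∧ ∀ X ∈ H, ∀ Y ⊆ X, Y ∈ H

/-- `F` is a flat of the complex with faces `H`. -/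
def IsFlat [DecidableEq V] (H : Set (Finset V)) (F : Finset V) : Prop :=
  ∀ I ∈ H, I ⊆ F → ∀ p ∉ F, insert p I ∈ H

/-- `X` is a facet (maximal face) of `H`. -/
def IsFacet (H : Set (Finset V)) (X : Finset V) : Prop :=
  X ∈ H ∧ ∀ Y ∈ H, X ⊆ Y → Y = X

/-- The `k`-truncation of the family of faces `H`. -/
def trunc (H : Set (Finset V)) (k : ℕ) : Set (Finset V) :=
  {X ∈ H | X.card ≤ k}

/-- `H` has dimension `d`: some face has `d+1` elements and all faces have at most `d+1`. -/
def HasDim (H : Set (Finset V)) (d : ℕ) : Prop :=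
  (∃ X ∈ H, X.card = d + 1) ∧ ∀ X ∈ H, X.card ≤ d + 1

/-- `H` is paving of dimension `d`: every `d`-subset is a face and the maximal face
cardinality is `d+1`. -/
def PavingDim (H : Set (Finset V)) (d : ℕ) : Prop :=
  (∀ X : Finset V, X.card = d → X ∈ H) ∧ (∃ X ∈ H, X.card = d + 1) ∧
    ∀ X ∈ H, X.card ≤ d + 1

/-- `X` is a transversal of the successive differences for a chain
`C 0 ⊆ C 1 ⊆ … ⊆ C k` in the family `F`, i.e. `X` enumerates as `x 0, …, x (k-1)`
with `x i ∈ C (i+1) \ C i`. -/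
def Transversal [DecidableEq V] (F : Set (Finset V)) (X : Finset V) : Prop :=
  ∃ (k : ℕ) (x : Fin k → V) (C : Fin (k + 1) → Finset V),
    Function.Injective x ∧
    X = Finset.image x Finset.univ ∧
    (∀ i, C i ∈ F) ∧
    (∀ i : Fin k, C i.castSucc ⊆ C i.succ) ∧
    (∀ i : Fin k, x i ∈ C i.succ ∧ x i ∉ C i.castSucc)

/-- The set of all transversals of the successive differences for chains in `F`. -/
def Tr [DecidableEq V] (F : Set (Finset V)) : Set (Finset V) :=
  {X | Transversal F X}

/-- `H` is boolean representable: its faces are exactly the transversals of the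
successive differences for chains in its lattice of flats. -/
def BooleanRepresentable [DecidableEq V] (H : Set (Finset V)) : Prop :=
  H = Tr {F | IsFlat H F}

/-- The family `ε(S)` for a complex of dimension `d`. -/
def eps [DecidableEq V] (H : Set (Finset V)) (d : ℕ) : Set (Finset V) :=
  {X | ∀ Y ∈ H, Y ⊆ X → Y.card ≤ d → ∀ p ∉ X, insert p Y ∈ H}

/-- `H` is a truncated boolean representable simplicial complex. -/
def IsTBRSC [DecidableEq V] (H : Set (Finset V)) : Prop :=
  ∃ (H' : Set (Finset V)) (k : ℕ), 1 ≤ k ∧ IsSimplicialComplex H' ∧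
    BooleanRepresentable H' ∧ H = trunc H' k

/-- The complex `B_d(V,L)`. -/
def Bd [DecidableEq V] (d : ℕ) (L : Finset V) : Set (Finset V) :=
  {X | X.card ≤ d} ∪ {X | X.card = d + 1 ∧ (X ∩ L).card = d}

/-- The closure of `X`: the intersection of all flats containing `X`. -/
noncomputable def cl [Fintype V] [DecidableEq V] (H : Set (Finset V)) (X : Finset V) :
    Finset V :=
  Finset.univ.filter fun v => ∀ F : Finset V, IsFlat H F → X ⊆ F → v ∈ F

/-- `H` is a near-matroid. -/
def NearMatroid [Fintype V] [DecidableEq V] (H : Set (Finset V)) : Prop :=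
  ∀ X ∈ H, ∀ Y ∈ H, cl H X = cl H Y → cl H X ≠ Finset.univ → X.card = Y.card

/-- `H` is a matroid: a simplicial complex with the exchange property. -/
def IsMatroid [DecidableEq V] (H : Set (Finset V)) : Prop :=
  IsSimplicialComplex H ∧
    ∀ I ∈ H, ∀ J ∈ H, I.card = J.card + 1 → ∃ i ∈ I, i ∉ J ∧ insert i J ∈ H

/-! A paving complex of dimension `d` (all `d`-sets are faces, no face has more than `d + 1`
points) is boolean representable as soon as every `(d + 1)`-face `X` has a point `p` and a flat
`F ⊇ X \ {p}` missing `p`: sets with fewer than `d` points are flats, so `X \ {p}` is a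
transversal of a chain of small flats topped by `F`, and `Finset.univ` on top picks up `p`.
Conversely, adding the points of a transversal one by one along the chain of flats never leaves
the complex.

A `(d + 1)`-face `X` of `B_d(V, L)` meets `L` in `d` points and has one point `p` outside `L`.
The separating flat is `L` if `|L| = d`; if `|L| = d + 1` it is `X ∩ L` when `L` is a face and
`L` otherwise; if `L` misses only `p`, it is `X` minus a point of `L`. -/

section Transversal

variable [DecidableEq V]

lemma Finset.image_snoc_univ {k : ℕ} (x : Fin k → V) (p : V) :
    Finset.image (Fin.snoc x p : Fin (k + 1) → V) Finset.univ
      = insert p (Finset.image x Finset.univ) := by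
  apply Finset.coe_injective
  push_cast [Finset.coe_image, Finset.coe_univ, Set.image_univ, Fin.range_snoc]
  rfl

lemma image_subset_of_chain {k : ℕ} {x : Fin k → V} {C : Fin (k + 1) → Finset V}
    (hC : ∀ i : Fin k, C i.castSucc ⊆ C i.succ) (hx : ∀ i, x i ∈ C i.succ) :
    Finset.image x Finset.univ ⊆ C (Fin.last k) := by
  have hmono : Monotone C := Fin.monotone_iff_le_succ.2 hC
  intro v hv
  obtain ⟨i, -, rfl⟩ := Finset.mem_image.1 hv
  exact hmono (Fin.le_last i.succ) (hx i)

theorem Transversal.mem_of_isFlat {H : Set (Finset V)} (hempty : ∅ ∈ H) {X : Finset V}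
    (hX : Transversal {F | IsFlat H F} X) : X ∈ H := by
  obtain ⟨k, x, C, -, rfl, hflat, hchain, hx⟩ := hX
  induction k with
  | zero => simpa using hempty
  | succ k ih =>
    have hchain' (i : Fin k) : Fin.init C i.castSucc ⊆ Fin.init C i.succ := by
      simpa [Fin.init] using hchain i.castSucc
    have hx' (i : Fin k) :
        Fin.init x i ∈ Fin.init C i.succ ∧ Fin.init x i ∉ Fin.init C i.castSucc := by
      simpa [Fin.init] using hx i.castSucc
    have hinit : Finset.image (Fin.init x) Finset.univ ∈ H :=
      ih (Fin.init x) (Fin.init C) (fun i => hflat _) hchain' hx'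
    have hsub : Finset.image (Fin.init x) Finset.univ ⊆ C (Fin.last k).castSucc :=
      image_subset_of_chain hchain' fun i => (hx' i).1
    rw [← Fin.snoc_init_self x, Finset.image_snoc_univ]
    exact hflat _ _ hinit hsub _ (hx (Fin.last k)).2

end Transversal

section TransversalTo

variable [DecidableEq V]

def TransversalTo (𝓕 : Set (Finset V)) (X A : Finset V) : Prop :=
  ∃ (k : ℕ) (x : Fin k → V) (C : Fin (k + 1) → Finset V),
    Function.Injective x ∧
    X = Finset.image x Finset.univ ∧
    (∀ i, C i ∈ 𝓕) ∧
    (∀ i : Fin k, C i.castSucc ⊆ C i.succ) ∧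
    (∀ i : Fin k, x i ∈ C i.succ ∧ x i ∉ C i.castSucc) ∧
    C (Fin.last k) = A

variable {𝓕 : Set (Finset V)}

lemma TransversalTo.transversal {X A : Finset V} (h : TransversalTo 𝓕 X A) : Transversal 𝓕 X :=
  let ⟨k, x, C, hinj, hX, hC, hchain, hx, _⟩ := h
  ⟨k, x, C, hinj, hX, hC, hchain, hx⟩

lemma transversalTo_empty {A : Finset V} (hA : A ∈ 𝓕) : TransversalTo 𝓕 ∅ A :=
  ⟨0, Fin.elim0, fun _ => A, fun i => i.elim0, by simp, fun _ => hA, fun i => i.elim0,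
    fun i => i.elim0, rfl⟩

lemma TransversalTo.subset {X A : Finset V} (h : TransversalTo 𝓕 X A) : X ⊆ A := by
  obtain ⟨k, x, C, -, rfl, -, hchain, hx, rfl⟩ := h
  exact image_subset_of_chain hchain fun i => (hx i).1

lemma TransversalTo.insert {X A G : Finset V} {p : V} (h : TransversalTo 𝓕 X A) (hG : G ∈ 𝓕)
    (hAG : A ⊆ G) (hpG : p ∈ G) (hpA : p ∉ A) : TransversalTo 𝓕 (insert p X) G := by
  have hpX : p ∉ X := fun hp => hpA (h.subset hp)
  obtain ⟨k, x, C, hinj, rfl, hC, hchain, hx, rfl⟩ := h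
  refine ⟨k + 1, Fin.snoc x p, Fin.snoc C G, ?_, (Finset.image_snoc_univ x p).symm, ?_, ?_, ?_,
    by simp⟩
  · exact Fin.snoc_injective_of_injective hinj (by simpa using hpX)
  · exact Fin.lastCases (by simpa using hG) (fun i => by simpa using hC i)
  · refine Fin.lastCases (by simpa using hAG) (fun i => ?_)
    rw [Fin.succ_castSucc, Fin.snoc_castSucc, Fin.snoc_castSucc]
    exact hchain i
  · refine Fin.lastCases (by simpa using ⟨hpG, hpA⟩) (fun i => ?_)
    rw [Fin.succ_castSucc, Fin.snoc_castSucc, Fin.snoc_castSucc, Fin.snoc_castSucc]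
    exact hx i

lemma transversalTo_of_card_le {n : ℕ} (hsmall : ∀ Y : Finset V, Y.card < n → Y ∈ 𝓕)
    {X F : Finset V} (hF : F ∈ 𝓕) (hXF : X ⊆ F) (hX : X.card ≤ n) : TransversalTo 𝓕 X F := by
  induction X using Finset.induction_on generalizing F with
  | empty => exact transversalTo_empty hF
  | insert p Y hpY ih =>
    have hYc : Y.card < n := by rw [Finset.card_insert_of_notMem hpY] at hX; omega
    exact (ih (hsmall Y hYc) subset_rfl hYc.le).insert hF ((Finset.subset_insert p Y).trans hXF)
      (hXF (Finset.mem_insert_self p Y)) hpY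

end TransversalTo

section Paving

variable [DecidableEq V] {H : Set (Finset V)} {d : ℕ}

lemma isFlat_univ [Fintype V] : IsFlat H Finset.univ :=
  fun _ _ _ p hp => absurd (Finset.mem_univ p) hp

lemma isFlat_of_card_lt (hsmall : ∀ X : Finset V, X.card ≤ d → X ∈ H) {F : Finset V}
    (hF : F.card < d) : IsFlat H F := by
  intro I _ hIF p _
  apply hsmall
  have := Finset.card_le_card hIF
  have := Finset.card_insert_le p I
  omega

lemma isFlat_of_card_eq (hsmall : ∀ X : Finset V, X.card ≤ d → X ∈ H) {F : Finset V}
    (hF : F.card = d) (hins : ∀ p ∉ F, insert p F ∈ H) : IsFlat H F := by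
  intro I hI hIF p hp
  rcases (Finset.card_le_card hIF).lt_or_eq with hlt | heq
  · exact isFlat_of_card_lt hsmall (hF ▸ hlt) I hI subset_rfl p (fun hpI => hp (hIF hpI))
  · rw [Finset.eq_of_subset_of_card_le hIF heq.ge]
    exact hins p hp

theorem booleanRepresentable_of_exists_isFlat [Fintype V]
    (hsmall : ∀ X : Finset V, X.card ≤ d → X ∈ H) (hdim : ∀ X ∈ H, X.card ≤ d + 1)
    (hsep : ∀ X ∈ H, X.card = d + 1 → ∃ p ∈ X, ∃ F, IsFlat H F ∧ X.erase p ⊆ F ∧ p ∉ F) :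
    BooleanRepresentable H := by
  refine Set.Subset.antisymm (fun X hX => ?_) fun X hX => hX.mem_of_isFlat (hsmall ∅ (by simp))
  have hflat (Y : Finset V) (hY : Y.card < d) : IsFlat H Y := isFlat_of_card_lt hsmall hY
  rcases (hdim X hX).lt_or_eq with hlt | heq
  · exact (transversalTo_of_card_le hflat isFlat_univ (Finset.subset_univ X) (by omega)).transversal
  · obtain ⟨p, hpX, F, hF, hXF, hpF⟩ := hsep X hX heq
    have hcard : (X.erase p).card ≤ d := by rw [Finset.card_erase_of_mem hpX]; omega
    have h := (transversalTo_of_card_le hflat hF hXF hcard).insert isFlat_univ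
      (Finset.subset_univ F) (Finset.mem_univ p) hpF
    rw [Finset.insert_erase hpX] at h
    exact h.transversal

end Paving

section Bd

variable [DecidableEq V] {d : ℕ} {L X I : Finset V} {p : V}

lemma card_le_of_mem_Bd (h : X ∈ Bd d L) : X.card ≤ d + 1 := by
  rcases h with h | ⟨h, -⟩
  · exact Nat.le_succ_of_le h
  · exact h.le

lemma mem_Bd_of_card_sdiff (hX : X.card = d + 1) (h : (X \ L).card = 1) : X ∈ Bd d L :=
  Or.inr ⟨hX, by have := Finset.card_inter_add_card_sdiff X L; omega⟩

lemma insert_mem_Bd (hIL : I ⊆ L) (hI : I.card = d) (hp : p ∉ L) : insert p I ∈ Bd d L := by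
  refine Or.inr ⟨?_, ?_⟩
  · rw [Finset.card_insert_of_notMem fun h => hp (hIL h), hI]
  · rw [Finset.insert_inter_of_notMem hp, Finset.inter_eq_left.2 hIL, hI]

lemma exists_erase_eq_inter_of_mem_Bd (hX : X ∈ Bd d L) (hXc : X.card = d + 1) :
    ∃ p ∈ X, p ∉ L ∧ X.erase p = X ∩ L := by
  have hsdiff : (X \ L).card = 1 := by
    rcases hX with h | ⟨-, h⟩
    · exact absurd (show X.card ≤ d from h) (by omega)
    · have := Finset.card_inter_add_card_sdiff X L
      omega
  obtain ⟨p, hp⟩ := Finset.card_eq_one.1 hsdiff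
  have hpXL : p ∈ X \ L := hp ▸ Finset.mem_singleton_self p
  refine ⟨p, (Finset.mem_sdiff.1 hpXL).1, (Finset.mem_sdiff.1 hpXL).2, ?_⟩
  rw [← Finset.sdiff_singleton_eq_erase, ← hp, sdiff_sdiff_right_self]
  rfl

def bdUnion (d : ℕ) (𝓛 : Set (Finset V)) : Set (Finset V) :=
  {X | ∃ L ∈ 𝓛, X ∈ Bd d L}

variable {𝓛 : Set (Finset V)}

lemma mem_bdUnion_of_card_le (hL : L ∈ 𝓛) (hX : X.card ≤ d) : X ∈ bdUnion d 𝓛 :=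
  ⟨L, hL, Or.inl hX⟩

lemma exists_isFlat_of_card_eq (hL : L ∈ 𝓛) (hLc : L.card = d) (hX : X ∈ Bd d L)
    (hXc : X.card = d + 1) :
    ∃ p ∈ X, ∃ F, IsFlat (bdUnion d 𝓛) F ∧ X.erase p ⊆ F ∧ p ∉ F := by
  obtain ⟨p, hpX, hpL, herase⟩ := exists_erase_eq_inter_of_mem_Bd hX hXc
  refine ⟨p, hpX, L, ?_, herase ▸ Finset.inter_subset_right, hpL⟩
  exact isFlat_of_card_eq (fun Y hY => mem_bdUnion_of_card_le hL hY) hLc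
    fun q hq => ⟨L, hL, insert_mem_Bd subset_rfl hLc hq⟩

lemma exists_isFlat_of_card_eq_succ (hL : L ∈ 𝓛) (hLc : L.card = d + 1) (hX : X ∈ Bd d L)
    (hXc : X.card = d + 1) :
    ∃ p ∈ X, ∃ F, IsFlat (bdUnion d 𝓛) F ∧ X.erase p ⊆ F ∧ p ∉ F := by
  obtain ⟨p, hpX, hpL, herase⟩ := exists_erase_eq_inter_of_mem_Bd hX hXc
  have hsmall (Y : Finset V) (hY : Y.card ≤ d) : Y ∈ bdUnion d 𝓛 := mem_bdUnion_of_card_le hL hY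
  by_cases hLH : L ∈ bdUnion d 𝓛
  · have hXL : (X ∩ L).card = d := by rw [← herase, Finset.card_erase_of_mem hpX, hXc]; rfl
    refine ⟨p, hpX, X ∩ L, isFlat_of_card_eq hsmall hXL fun q hq => ?_, herase.le,
      fun h => hpL (Finset.mem_inter.1 h).2⟩
    by_cases hqL : q ∈ L
    · convert hLH
      refine Finset.eq_of_subset_of_card_le (Finset.insert_subset hqL Finset.inter_subset_right) ?_
      rw [Finset.card_insert_of_notMem hq, hXL, hLc]
    · exact ⟨L, hL, insert_mem_Bd Finset.inter_subset_right hXL hqL⟩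
  · refine ⟨p, hpX, L, fun I hI hIL q hq => ?_, herase ▸ Finset.inter_subset_right, hpL⟩
    have hIL' : I ≠ L := fun h => hLH (h ▸ hI)
    have hIc : I.card < d + 1 :=
      hLc ▸ Finset.card_lt_card (Finset.ssubset_iff_subset_ne.2 ⟨hIL, hIL'⟩)
    rcases (Nat.lt_succ_iff.1 hIc).lt_or_eq with hlt | heq
    · exact hsmall _ ((Finset.card_insert_le q I).trans hlt)
    · exact ⟨L, hL, insert_mem_Bd hIL heq hq⟩

lemma exists_isFlat_of_card_eq_card_sub_one [Fintype V] (hd : 1 ≤ d) (hL : L ∈ 𝓛)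
    (hLc : L.card = Fintype.card V - 1) (hX : X ∈ Bd d L) (hXc : X.card = d + 1) :
    ∃ p ∈ X, ∃ F, IsFlat (bdUnion d 𝓛) F ∧ X.erase p ⊆ F ∧ p ∉ F := by
  obtain ⟨p, hpX, hpL, herase⟩ := exists_erase_eq_inter_of_mem_Bd hX hXc
  have hcompl : {p} = Lᶜ := by
    refine Finset.eq_of_subset_of_card_le (by simpa using hpL) ?_
    rw [Finset.card_compl, hLc, Finset.card_singleton]
    omega
  have hmem {Y : Finset V} (hY : Y.card = d + 1) (hpY : p ∈ Y) : Y ∈ Bd d L := by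
    refine mem_Bd_of_card_sdiff hY ?_
    rw [Finset.sdiff_eq_inter_compl, ← hcompl, Finset.inter_singleton_of_mem hpY,
      Finset.card_singleton]
  obtain ⟨r, hr⟩ : (X ∩ L).Nonempty := by
    rw [← Finset.card_pos, ← herase, Finset.card_erase_of_mem hpX]
    omega
  obtain ⟨hrX, hrL⟩ := Finset.mem_inter.1 hr
  have hpF : p ∈ X.erase r := Finset.mem_erase.2 ⟨fun h => hpL (h ▸ hrL), hpX⟩
  have hF : (X.erase r).card = d := by rw [Finset.card_erase_of_mem hrX, hXc]; rfl
  refine ⟨r, hrX, X.erase r, ?_, subset_rfl, Finset.notMem_erase r X⟩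
  refine isFlat_of_card_eq (fun Y hY => mem_bdUnion_of_card_le hL hY) hF fun q hq => ⟨L, hL, ?_⟩
  exact hmem (by rw [Finset.card_insert_of_notMem hq, hF]) (Finset.mem_insert_of_mem hpF)

end Bd

theorem stmt_15_general [Fintype V] [DecidableEq V] (d : ℕ) (hd : 2 ≤ d)
    (𝓛 : Set (Finset V)) (hne : 𝓛.Nonempty)
    (hcard : ∀ L ∈ 𝓛, L.card = d ∨ L.card = d + 1 ∨ L.card = Fintype.card V - 1) :
    BooleanRepresentable {X : Finset V | ∃ L ∈ 𝓛, X ∈ Bd d L} := by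
  obtain ⟨L₀, hL₀⟩ := hne
  refine booleanRepresentable_of_exists_isFlat (d := d)
    (fun X hX => mem_bdUnion_of_card_le hL₀ hX) (fun X ⟨L, _, hXL⟩ => card_le_of_mem_Bd hXL) ?_
  rintro X ⟨L, hL, hXL⟩ hXc
  rcases hcard L hL with hLc | hLc | hLc
  · exact exists_isFlat_of_card_eq hL hLc hXL hXc
  · exact exists_isFlat_of_card_eq_succ hL hLc hXL hXc
  · exact exists_isFlat_of_card_eq_card_sub_one (by omega) hL hLc hXL hXc

theorem stmt_15 [Fintype V] [DecidableEq V] [Nonempty V] (d : ℕ) (hd : 2 ≤ d)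
    (hV : d + 1 ≤ Fintype.card V) (𝓛 : Set (Finset V)) (hne : 𝓛.Nonempty)
    (hcard : ∀ L ∈ 𝓛, L.card = d ∨ L.card = d + 1 ∨ L.card = Fintype.card V - 1) :
    BooleanRepresentable {X : Finset V | ∃ L ∈ 𝓛, X ∈ Bd d L} :=
  stmt_15_general d hd 𝓛 hne hcard
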